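/- For each fixed r ≥ 2, as n tends to infinity over positive integers n having at least one prime factor at most r, the ratio IR(X_n)/α(X_n) tends to 1. -/

import Mathlib

/-!
Independent sets are irredundant, so `α ≤ IR`; the multiples of a divisor `d ≤ r` of `n` are
independent, so `n ≤ r α`. Conversely, the isolated vertices of an irredundant set `S` are
independent, and every other `b ∈ S` has a private neighbour `u` adjacent to it. Reducing modulo
the primes `p ∣ n`, the residues of `u` differ from those of `b` at every `p` but agree with those
of each other `w ∈ S` at some `p`; removing one coordinate at a time shows that at most
`(ω(n) + 1)!` vertices admit such patterns. Hence `IR ≤ α + (ω(n) + 1)!`, and `(ω(n) + 1)! / n → 0`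
because `n` is at least the product of its prime factors, which is at least `(3/2)^ω(n) ω(n)!`.
-/

open SimpleGraph

def unitaryCayley (n : ℕ) : SimpleGraph (ZMod n) where
  Adj a b := a ≠ b ∧ IsUnit (a - b)
  symm := by
    constructor
    rintro a b ⟨h1, h2⟩
    refine ⟨h1.symm, ?_⟩
    rw [← neg_sub]
    exact h2.neg
  loopless := by constructor; rintro a ⟨h, _⟩; exact h rfl

def tensorProd {α β : Type*} (G : SimpleGraph α) (H : SimpleGraph β) :
    SimpleGraph (α × β) where
  Adj x y := G.Adj x.1 y.1 ∧ H.Adj x.2 y.2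
  symm := by constructor; rintro x y ⟨h1, h2⟩; exact ⟨h1.symm, h2.symm⟩
  loopless := by constructor; rintro x ⟨h, _⟩; exact G.loopless.irrefl _ h

def tensorPi {ι : Type*} {α : ι → Type*} (G : ∀ i, SimpleGraph (α i)) :
    SimpleGraph (∀ i, α i) where
  Adj x y := x ≠ y ∧ ∀ i, (G i).Adj (x i) (y i)
  symm := by constructor; rintro x y ⟨h1, h2⟩; exact ⟨h1.symm, fun i => (h2 i).symm⟩
  loopless := by constructor; rintro x ⟨h, _⟩; exact h rfl

/-- The balanced complete multipartite graph `K[a,b]`: `b` parts of size `a`. -/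
def multipartite (a b : ℕ) : SimpleGraph (Fin a × Fin b) where
  Adj x y := x.2 ≠ y.2
  symm := by constructor; rintro x y h; exact h.symm
  loopless := by constructor; rintro x h; exact h rfl

def prodComplete2 (n1 n2 : ℕ) : SimpleGraph (Fin n1 × Fin n2) :=
  tensorProd (completeGraph (Fin n1)) (completeGraph (Fin n2))

def prodComplete3 (n1 n2 n3 : ℕ) : SimpleGraph (Fin n1 × Fin n2 × Fin n3) :=
  tensorProd (completeGraph (Fin n1)) (prodComplete2 n2 n3)

def prodCompletePi (t : ℕ) (n : Fin t → ℕ) : SimpleGraph (∀ i, Fin (n i)) :=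
  tensorPi fun i => completeGraph (Fin (n i))

def prodMultipartite (t : ℕ) (a b : Fin t → ℕ) :
    SimpleGraph (∀ i, Fin (a i) × Fin (b i)) :=
  tensorPi fun i => multipartite (a i) (b i)

def IsDominating {V : Type*} (G : SimpleGraph V) (S : Set V) : Prop :=
  ∀ v, v ∈ S ∨ ∃ u ∈ S, G.Adj u v

def IsTotalDominating {V : Type*} (G : SimpleGraph V) (S : Set V) : Prop :=
  ∀ v, ∃ u ∈ S, G.Adj u v

def IsIndep {V : Type*} (G : SimpleGraph V) (S : Set V) : Prop :=
  ∀ u ∈ S, ∀ v ∈ S, ¬ G.Adj u v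

def closedNbhd {V : Type*} (G : SimpleGraph V) (v : V) : Set V :=
  {u | u = v ∨ G.Adj v u}

def IsIrredundant {V : Type*} (G : SimpleGraph V) (S : Set V) : Prop :=
  ∀ v ∈ S, ∃ u ∈ closedNbhd G v, ∀ w ∈ S, w ≠ v → u ∉ closedNbhd G w

noncomputable def domNum {V : Type*} (G : SimpleGraph V) : ℕ :=
  sInf {k | ∃ S : Set V, IsDominating G S ∧ S.ncard = k}

noncomputable def totalDomNum {V : Type*} (G : SimpleGraph V) : ℕ :=
  sInf {k | ∃ S : Set V, IsTotalDominating G S ∧ S.ncard = k}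

noncomputable def irNum {V : Type*} (G : SimpleGraph V) : ℕ :=
  sInf {k | ∃ S : Set V, Maximal (IsIrredundant G) S ∧ S.ncard = k}

noncomputable def iNum {V : Type*} (G : SimpleGraph V) : ℕ :=
  sInf {k | ∃ S : Set V, Maximal (IsIndep G) S ∧ S.ncard = k}

noncomputable def alphaNum {V : Type*} (G : SimpleGraph V) : ℕ :=
  sSup {k | ∃ S : Set V, IsIndep G S ∧ S.ncard = k}

noncomputable def upperDomNum {V : Type*} (G : SimpleGraph V) : ℕ :=
  sSup {k | ∃ S : Set V, Minimal (IsDominating G) S ∧ S.ncard = k}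

noncomputable def IRNum {V : Type*} (G : SimpleGraph V) : ℕ :=
  sSup {k | ∃ S : Set V, IsIrredundant G S ∧ S.ncard = k}

/-- The Jacobsthal function: least `m > 0` such that any `m` consecutive integers
contain one coprime to `n`. -/
noncomputable def jacobsthal (n : ℕ) : ℕ :=
  sInf {m | 0 < m ∧ ∀ x : ℤ, ∃ i : ℕ, i < m ∧ Int.gcd (x + i) n = 1}


open Finset Nat Filter Topology

theorem Finset.card_le_factorial_of_exists_private_pattern {V ι : Type*} {C : ι → Type*}
    (f : ∀ i, V → C i) (Q : Finset ι) (B : Finset V)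
    (hB : ∀ b ∈ B, ∃ c : ∀ i, C i,
      (∀ i ∈ Q, f i b ≠ c i) ∧ ∀ w ∈ B, w ≠ b → ∃ i ∈ Q, f i w = c i) :
    #B ≤ (#Q + 1)! := by
  classical
  induction Q using Finset.strongInduction generalizing B with
  | H Q ih =>
  obtain rfl | ⟨b₀, hb₀⟩ := B.eq_empty_or_nonempty
  · simp
  obtain ⟨c₀, -, hc₀⟩ := hB b₀ hb₀
  set hit : ι → Finset V := fun i => {w ∈ B | w ≠ b₀ ∧ f i w = c₀ i}
  have hcover : B ⊆ insert b₀ (Q.biUnion hit) := by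
    intro w hw
    rcases eq_or_ne w b₀ with rfl | hne
    · exact mem_insert_self _ _
    · obtain ⟨i, hi, hfi⟩ := hc₀ w hw hne
      exact mem_insert_of_mem (mem_biUnion.2 ⟨i, hi, mem_filter.2 ⟨hw, hne, hfi⟩⟩)
  -- On `hit i` coordinate `i` is constant, so it can no longer separate and may be dropped.
  have hhit : ∀ i ∈ Q, #(hit i) ≤ (#Q)! := by
    intro i hi
    have h := ih (Q.erase i) (erase_ssubset hi) (hit i) fun b hb => by
      obtain ⟨hbB, -, hbi⟩ := mem_filter.1 hb
      obtain ⟨c, hcb, hcw⟩ := hB b hbB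
      refine ⟨c, fun j hj => hcb j (mem_of_mem_erase hj), fun w hw hwb => ?_⟩
      obtain ⟨hwB, -, hwi⟩ := mem_filter.1 hw
      obtain ⟨j, hj, hfj⟩ := hcw w hwB hwb
      refine ⟨j, mem_erase.2 ⟨?_, hj⟩, hfj⟩
      rintro rfl
      exact hcb j hj (hbi.trans (hwi.symm.trans hfj))
    rwa [card_erase_of_mem hi, Nat.sub_add_cancel (card_pos.2 ⟨i, hi⟩)] at h
  calc #B ≤ #(Q.biUnion hit) + 1 := (card_le_card hcover).trans (card_insert_le _ _)
    _ ≤ ∑ i ∈ Q, #(hit i) + 1 := by gcongr; exact card_biUnion_le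
    _ ≤ ∑ _i ∈ Q, (#Q)! + 1 := by gcongr with i hi; exact hhit i hi
    _ ≤ (#Q + 1)! := by
      rw [sum_const, smul_eq_mul, factorial_succ]
      nlinarith [factorial_pos #Q]

theorem Finset.factorial_card_le_prod (s : Finset ℕ) (hs : 0 ∉ s) : (#s)! ≤ ∏ m ∈ s, m := by
  induction s using Finset.induction_on_max with
  | empty => simp
  | insert a s ha ih =>
    have has : a ∉ s := fun h => (ha a h).false
    have hcard : #s < a := by
      have : s ⊆ Ioo 0 a := fun m hm =>
        mem_Ioo.2 ⟨pos_of_ne_zero fun h => hs (h ▸ mem_insert_of_mem hm), ha m hm⟩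
      calc #s ≤ #(Ioo 0 a) := card_le_card this
        _ < a := by
          have : a ≠ 0 := fun h => hs (h ▸ mem_insert_self a s)
          rw [card_Ioo]; omega
    rw [card_insert_of_notMem has, prod_insert has, factorial_succ]
    exact Nat.mul_le_mul hcard (ih fun h => hs (mem_insert_of_mem h))

theorem Nat.three_pow_mul_factorial_le_two_pow_mul_prod (s : Finset ℕ) (hs : ∀ p ∈ s, p.Prime) :
    3 ^ #s * (#s)! ≤ 2 ^ #s * ∏ p ∈ s, p := by
  -- `p ↦ (p + 1) / 2` is injective on primes, since `2` is the only even one.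
  have hinj : Set.InjOn (fun p => (p + 1) / 2) s := by
    intro p hp q hq (hpq : (p + 1) / 2 = (q + 1) / 2)
    have := (hs p hp).two_le
    have := (hs q hq).two_le
    rcases (hs p hp).eq_two_or_odd with h | h <;> rcases (hs q hq).eq_two_or_odd with h' | h' <;>
      omega
  calc 3 ^ #s * (#s)! ≤ 3 ^ #s * ∏ p ∈ s, (p + 1) / 2 := by
        gcongr
        rw [← Finset.card_image_of_injOn hinj]
        exact (factorial_card_le_prod _ (by simpa using fun h => not_prime_zero (hs 0 h))).trans_eq
          (prod_image hinj)
    _ = ∏ p ∈ s, 3 * ((p + 1) / 2) := by rw [prod_mul_distrib, prod_const]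
    _ ≤ ∏ p ∈ s, 2 * p := by
        refine prod_le_prod' fun p hp => ?_
        have := (hs p hp).two_le
        omega
    _ = 2 ^ #s * ∏ p ∈ s, p := by rw [prod_mul_distrib, prod_const]

theorem Nat.factorial_succ_card_primeFactors_div_le {n : ℕ} (hn : n ≠ 0) :
    ((#n.primeFactors + 1)! : ℝ) / n ≤ (#n.primeFactors + 1) * (2 / 3) ^ #n.primeFactors := by
  set k := #n.primeFactors
  have hprod : (3 ^ k * k ! : ℝ) ≤ 2 ^ k * n := by
    exact_mod_cast (three_pow_mul_factorial_le_two_pow_mul_prod _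
      fun _ => prime_of_mem_primeFactors).trans
        (Nat.mul_le_mul_left _ (le_of_dvd (pos_of_ne_zero hn) (prod_primeFactors_dvd n)))
  rw [div_le_iff₀ (by positivity), factorial_succ, cast_mul, mul_assoc]
  push_cast
  gcongr
  rw [div_pow, div_mul_eq_mul_div, le_div_iff₀ (by positivity)]
  linarith

theorem Nat.tendsto_factorial_succ_card_primeFactors_div :
    Tendsto (fun n : ℕ => ((#n.primeFactors + 1)! : ℝ) / n) atTop (𝓝 0) := by
  have hgeom : Tendsto (fun k : ℕ => (k + 1 : ℝ) * (2 / 3) ^ k) atTop (𝓝 0) := by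
    simpa [add_mul] using (tendsto_self_mul_const_pow_of_lt_one (by norm_num) (by norm_num)).add
      (tendsto_pow_atTop_nhds_zero_of_lt_one (by norm_num : (0 : ℝ) ≤ 2 / 3) (by norm_num))
  refine tendsto_order.2 ⟨fun a ha => .of_forall fun n => ha.trans_le (by positivity),
    fun ε hε => ?_⟩
  obtain ⟨K, hK⟩ := eventually_atTop.1 (hgeom.eventually (gt_mem_nhds hε))
  -- Few prime factors: the numerator is at most `K !`; many: the geometric bound applies.
  filter_upwards [(tendsto_const_div_atTop_nhds_zero_nat (K ! : ℝ)).eventually (gt_mem_nhds hε),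
    eventually_ne_atTop 0] with n hsmall hn
  rcases le_or_gt K #n.primeFactors with hk | hk
  · exact (factorial_succ_card_primeFactors_div_le hn).trans_lt (hK _ hk)
  · refine lt_of_le_of_lt ?_ hsmall
    gcongr
    exact hk

theorem ZMod.cast_ne_cast_of_isUnit_sub {n p : ℕ} [Fact (1 < p)] (hp : p ∣ n) {x y : ZMod n}
    (h : IsUnit (x - y)) : (x.cast : ZMod p) ≠ y.cast := by
  intro hxy
  have := h.map (ZMod.castHom hp (ZMod p))
  rw [map_sub, ZMod.castHom_apply, ZMod.castHom_apply, hxy, sub_self] at this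
  exact not_isUnit_zero this

theorem ZMod.exists_mem_primeFactors_cast_eq_of_not_isUnit_sub {n : ℕ} [NeZero n] {x y : ZMod n}
    (h : ¬IsUnit (x - y)) : ∃ p ∈ n.primeFactors, (x.cast : ZMod p) = y.cast := by
  rw [← ZMod.natCast_zmod_val (x - y), ZMod.isUnit_iff_coprime] at h
  obtain ⟨p, hp, hpxy, hpn⟩ := Nat.Prime.not_coprime_iff_dvd.1 h
  refine ⟨p, mem_primeFactors.2 ⟨hp, hpn, NeZero.ne n⟩, ?_⟩
  have : NeZero p := ⟨hp.ne_zero⟩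
  rw [← sub_eq_zero, ← ZMod.cast_sub hpn, ← ZMod.natCast_val, ZMod.natCast_eq_zero_iff]
  exact hpxy

section Irredundance

variable {V : Type*} {G : SimpleGraph V} {S : Set V}

theorem IsIndep.isIrredundant (h : IsIndep G S) : IsIrredundant G S :=
  fun v hv => ⟨v, Or.inl rfl, fun w hw hwv hvw => hvw.elim hwv.symm (h w hw v hv)⟩

theorem IsIrredundant.exists_adj_private {v w₀ : V} (hS : IsIrredundant G S) (hv : v ∈ S)
    (hw₀ : w₀ ∈ S) (hvw₀ : G.Adj v w₀) :
    ∃ u, G.Adj v u ∧ ∀ w ∈ S, w ≠ v → u ≠ w ∧ ¬G.Adj w u := by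
  obtain ⟨u, hu, hpriv⟩ := hS v hv
  have huv : u ≠ v := by
    rintro rfl
    exact hpriv w₀ hw₀ (G.ne_of_adj hvw₀).symm (Or.inr hvw₀.symm)
  exact ⟨u, hu.resolve_left huv, fun w hw hwv => not_or.1 (hpriv w hw hwv)⟩

theorem bddAbove_setOf_exists_ncard [Finite V] (P : Set V → Prop) :
    BddAbove {k | ∃ S : Set V, P S ∧ S.ncard = k} :=
  ⟨Nat.card V, by rintro _ ⟨S, -, rfl⟩; exact S.ncard_le_card⟩

theorem IsIndep.ncard_le_alphaNum [Finite V] (h : IsIndep G S) : S.ncard ≤ alphaNum G :=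
  le_csSup (bddAbove_setOf_exists_ncard _) ⟨S, h, rfl⟩

theorem alphaNum_le_IRNum [Finite V] : alphaNum G ≤ IRNum G :=
  csSup_le_csSup (bddAbove_setOf_exists_ncard _) ⟨0, ∅, fun _ h => h.elim, Set.ncard_empty _⟩
    fun _ ⟨S, hS, hk⟩ => ⟨S, hS.isIrredundant, hk⟩

theorem ncard_le_alphaNum_add_ncard_nonisolated [Finite V] (S : Set V) :
    S.ncard ≤ alphaNum G + {v ∈ S | ∃ w ∈ S, G.Adj v w}.ncard := by
  set I := {v ∈ S | ∀ w ∈ S, ¬G.Adj v w}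
  have hI : IsIndep G I := fun u hu v hv => hu.2 v hv.1
  have hS : S ⊆ I ∪ {v ∈ S | ∃ w ∈ S, G.Adj v w} := by
    intro v hv
    by_cases h : ∃ w ∈ S, G.Adj v w
    · exact Or.inr ⟨hv, h⟩
    · exact Or.inl ⟨hv, by simpa using h⟩
  calc S.ncard ≤ (I ∪ {v ∈ S | ∃ w ∈ S, G.Adj v w}).ncard := Set.ncard_le_ncard hS
    _ ≤ _ := (Set.ncard_union_le _ _).trans (by gcongr; exact hI.ncard_le_alphaNum)

end Irredundance

section UnitaryCayley

variable {n : ℕ} [NeZero n]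

theorem IsIrredundant.ncard_nonisolated_unitaryCayley_le {S : Set (ZMod n)}
    (hS : IsIrredundant (unitaryCayley n) S) :
    {v ∈ S | ∃ w ∈ S, (unitaryCayley n).Adj v w}.ncard ≤ (#n.primeFactors + 1)! := by
  classical
  set B := {v ∈ S | ∃ w ∈ S, (unitaryCayley n).Adj v w}
  rw [Set.ncard_eq_toFinset_card' B]
  refine card_le_factorial_of_exists_private_pattern (C := ZMod) (fun p x => x.cast) _ _ ?_
  intro b hb
  obtain ⟨hbS, w₀, hw₀, hbw₀⟩ := Set.mem_toFinset.1 hb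
  obtain ⟨u, hbu, hpriv⟩ := hS.exists_adj_private hbS hw₀ hbw₀
  refine ⟨fun p => u.cast, fun p hp => ?_, fun w hw hwb => ?_⟩
  · have : Fact (1 < p) := ⟨(prime_of_mem_primeFactors hp).one_lt⟩
    exact ZMod.cast_ne_cast_of_isUnit_sub (dvd_of_mem_primeFactors hp) hbu.2
  · obtain ⟨huw, hwu⟩ := hpriv w (Set.mem_toFinset.1 hw).1 hwb
    exact ZMod.exists_mem_primeFactors_cast_eq_of_not_isUnit_sub fun h => hwu ⟨huw.symm, h⟩

theorem IRNum_unitaryCayley_le :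
    IRNum (unitaryCayley n) ≤ alphaNum (unitaryCayley n) + (#n.primeFactors + 1)! :=
  csSup_le' fun _ ⟨S, hS, hk⟩ => hk ▸ (ncard_le_alphaNum_add_ncard_nonisolated S).trans
    (Nat.add_le_add_left hS.ncard_nonisolated_unitaryCayley_le _)

theorem le_alphaNum_unitaryCayley_mul {d : ℕ} (hd : d ∣ n) (hd1 : d ≠ 1) :
    n ≤ alphaNum (unitaryCayley n) * d := by
  set M := AddSubgroup.zmultiples (d : ZMod n)
  have hM : IsIndep (unitaryCayley n) (M : Set (ZMod n)) := by
    rintro u hu v hv ⟨-, huv⟩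
    obtain ⟨k, hk⟩ := AddSubgroup.mem_zmultiples_iff.1 (M.sub_mem hu hv)
    rw [← hk, zsmul_eq_mul] at huv
    exact hd1 (((ZMod.isUnit_iff_coprime d n).1 (isUnit_of_mul_isUnit_right huv)).eq_one_of_dvd hd)
  have hcard : (M : Set (ZMod n)).ncard = n / d := by
    rw [← Nat.card_coe_set_eq, SetLike.coe_sort_coe, Nat.card_zmultiples,
      ZMod.addOrderOf_coe _ (NeZero.ne n), Nat.gcd_eq_right hd]
  calc n = n / d * d := (Nat.div_mul_cancel hd).symm
    _ ≤ _ := by gcongr; exact hcard ▸ hM.ncard_le_alphaNum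

theorem IRNum_div_alphaNum_unitaryCayley_mem_Icc {d : ℕ} (hd : d ∣ n) (hd1 : d ≠ 1) :
    (IRNum (unitaryCayley n) : ℝ) / alphaNum (unitaryCayley n) ∈
      Set.Icc (1 : ℝ) (1 + d * ((#n.primeFactors + 1)! / n)) := by
  have hnα := le_alphaNum_unitaryCayley_mul hd hd1
  have hα : alphaNum (unitaryCayley n) ≠ 0 := fun h => NeZero.ne n (by simpa [h] using hnα)
  have hn : (n : ℝ) ≠ 0 := mod_cast NeZero.ne n
  have hIR : (IRNum (unitaryCayley n) : ℝ) ≤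
      alphaNum (unitaryCayley n) + ((#n.primeFactors + 1)! : ℝ) :=
    mod_cast IRNum_unitaryCayley_le
  refine ⟨(one_le_div (by positivity)).2 (mod_cast alphaNum_le_IRNum),
    (div_le_iff₀ (by positivity)).2 ?_⟩
  calc (IRNum (unitaryCayley n) : ℝ)
      ≤ alphaNum (unitaryCayley n) + (#n.primeFactors + 1)! / n * n := by
        rwa [div_mul_cancel₀ _ hn]
    _ ≤ alphaNum (unitaryCayley n) +
          (#n.primeFactors + 1)! / n * (alphaNum (unitaryCayley n) * d) := by
        gcongr
        exact_mod_cast hnα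
    _ = _ := by ring

end UnitaryCayley

theorem stmt18_general (r : ℕ) :
    Filter.Tendsto
      (fun n : ℕ => (IRNum (unitaryCayley n) : ℝ) / alphaNum (unitaryCayley n))
      (Filter.atTop ⊓ Filter.principal {n : ℕ | ∃ d, 2 ≤ d ∧ d ≤ r ∧ d ∣ n})
      (nhds 1) := by
  have hbounds : ∀ᶠ n : ℕ in atTop ⊓ 𝓟 {n : ℕ | ∃ d, 2 ≤ d ∧ d ≤ r ∧ d ∣ n},
      (IRNum (unitaryCayley n) : ℝ) / alphaNum (unitaryCayley n) ∈
        Set.Icc (1 : ℝ) (1 + r * ((#n.primeFactors + 1)! / n)) := by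
    rw [eventually_inf_principal]
    filter_upwards [eventually_ne_atTop 0] with n hn ⟨d, hd2, hdr, hdn⟩
    have : NeZero n := ⟨hn⟩
    obtain ⟨hlower, hupper⟩ := IRNum_div_alphaNum_unitaryCayley_mem_Icc hdn (by omega)
    exact ⟨hlower, hupper.trans (by gcongr)⟩
  have hlimit : Tendsto (fun n : ℕ => 1 + r * (((#n.primeFactors + 1)! : ℝ) / n)) atTop (𝓝 1) := by
    simpa using tendsto_const_nhds.add
      (tendsto_const_nhds.mul Nat.tendsto_factorial_succ_card_primeFactors_div)
  exact tendsto_of_tendsto_of_tendsto_of_le_of_le' tendsto_const_nhds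
    (hlimit.mono_left inf_le_left) (hbounds.mono fun _ h => h.1) (hbounds.mono fun _ h => h.2)

theorem stmt18 (r : ℕ) (hr : 2 ≤ r) :
    Filter.Tendsto
      (fun n : ℕ => (IRNum (unitaryCayley n) : ℝ) / alphaNum (unitaryCayley n))
      (Filter.atTop ⊓ Filter.principal {n : ℕ | ∃ d, 2 ≤ d ∧ d ≤ r ∧ d ∣ n})
      (nhds 1) :=
  stmt18_general r
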